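/- arXiv:1210.7090 — 4 statements merged into one kernel-verified Lean document; each statement's English description precedes it below -/
import Mathlib

section
/- Kronecker-power multinomial theorem: for matrices x_1,…,x_n ∈ M_{p,q}(ℝ) and k ∈ ℕ, the k-th Kronecker power of their sum satisfies (x_1 + ⋯ + x_n)^{⊗k} = Σ_{u=1}^{k} Σ_{λ ∈ C(k,u)} Σ_{μ ∈ W(n,u)} Σ_{π ∈ 𝔖(λ)} x_{μ_{π_1}} ⊗ x_{μ_{π_2}} ⊗ ⋯ ⊗ x_{μ_{π_k}}. -/
open Matrix Finset

/-- The `k`-th Kronecker power of a matrix `x ∈ M_{p,q}(ℝ)`, realized on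
function index types: the `(f, g)` entry is `∏ j, x (f j) (g j)`. -/
def kronPow {p q : ℕ} (k : ℕ) (x : Matrix (Fin p) (Fin q) ℝ) :
    Matrix (Fin k → Fin p) (Fin k → Fin q) ℝ :=
  Matrix.of fun f g => ∏ j, x (f j) (g j)

lemma fiber_sum {k u : ℕ} (π : Fin k → Fin u) :
    ∑ i, (Finset.univ.filter fun j => π j = i).card = k := by
  rw [← Finset.card_eq_sum_card_fiberwise (fun x _ => Finset.mem_univ (π x))]
  simp

lemma key_sum {M : Type*} [AddCommMonoid M] {n k : ℕ} (hk : 0 < k)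
    (F : (Fin k → Fin n) → M) :
    (∑ u ∈ Finset.Icc 1 k,
        ∑ lam ∈ (Finset.Nat.antidiagonalTuple u k).filter fun lam => ∀ i, 1 ≤ lam i,
          ∑ μ ∈ Finset.univ.filter fun μ : Fin u → Fin n => StrictMono μ,
            ∑ π ∈ Finset.univ.filter
                (fun π : Fin k → Fin u =>
                  ∀ i, (Finset.univ.filter fun j => π j = i).card = lam i),
              F (fun j => μ (π j)))
      = ∑ σ : Fin k → Fin n, F σ := by
  have h1 : ∀ (u : ℕ) (μ : Fin u → Fin n),
      (∑ lam ∈ (Finset.Nat.antidiagonalTuple u k).filter fun lam => ∀ i, 1 ≤ lam i,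
        ∑ π ∈ Finset.univ.filter
            (fun π : Fin k → Fin u =>
              ∀ i, (Finset.univ.filter fun j => π j = i).card = lam i),
          F (fun j => μ (π j)))
      = ∑ π ∈ Finset.univ.filter (fun π : Fin k → Fin u => Function.Surjective π),
          F (fun j => μ (π j)) := by
    intro u μ
    have hfe : ∀ lam : Fin u → ℕ,
        (Finset.univ.filter
          (fun π : Fin k → Fin u =>
            ∀ i, (Finset.univ.filter fun j => π j = i).card = lam i))
        = Finset.univ.filter
            (fun π : Fin k → Fin u =>
              (fun i => (Finset.univ.filter fun j => π j = i).card) = lam) := by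
      intro lam
      apply Finset.filter_congr
      intro π _
      simp [funext_iff]
    simp_rw [hfe]
    rw [Finset.sum_fiberwise_eq_sum_filter]
    apply Finset.sum_congr _ (fun _ _ => rfl)
    apply Finset.filter_congr
    intro π _
    simp only [Finset.mem_filter, Finset.Nat.mem_antidiagonalTuple, fiber_sum, true_and]
    constructor
    · intro h i
      obtain ⟨j, hj⟩ := Finset.card_pos.mp (h i)
      exact ⟨j, (Finset.mem_filter.mp hj).2⟩
    · intro h i
      obtain ⟨j, hj⟩ := h i
      exact Finset.card_pos.mpr ⟨j, Finset.mem_filter.mpr ⟨Finset.mem_univ j, hj⟩⟩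
  calc
    (∑ u ∈ Finset.Icc 1 k,
        ∑ lam ∈ (Finset.Nat.antidiagonalTuple u k).filter fun lam => ∀ i, 1 ≤ lam i,
          ∑ μ ∈ Finset.univ.filter fun μ : Fin u → Fin n => StrictMono μ,
            ∑ π ∈ Finset.univ.filter
                (fun π : Fin k → Fin u =>
                  ∀ i, (Finset.univ.filter fun j => π j = i).card = lam i),
              F (fun j => μ (π j)))
      = ∑ u ∈ Finset.Icc 1 k,
          ∑ σ ∈ Finset.univ.filter
              (fun σ : Fin k → Fin n => (Finset.univ.image σ).card = u), F σ := by
        refine Finset.sum_congr rfl fun u _ => ?_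
        rw [Finset.sum_comm]
        rw [Finset.sum_congr rfl (fun μ _ => h1 u μ)]
        rw [← Finset.sum_product']
        refine Finset.sum_bij'
          (fun a _ => fun j => a.1 (a.2 j))
          (fun σ hσ => by
            have h : (Finset.univ.image σ).card = u := (Finset.mem_filter.mp hσ).2
            exact (((Finset.univ.image σ).orderEmbOfFin h : Fin u → Fin n),
              fun j => ((Finset.univ.image σ).orderIsoOfFin h).symm
                ⟨σ j, Finset.mem_image_of_mem σ (Finset.mem_univ j)⟩))
          ?_ ?_ ?_ ?_ ?_
        · rintro ⟨μ, π⟩ ha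
          rw [Finset.mem_product] at ha
          obtain ⟨hμ, hπ⟩ := ha
          rw [Finset.mem_filter] at hμ hπ ⊢
          refine ⟨Finset.mem_univ _, ?_⟩
          have himg : Finset.univ.image (fun j => μ (π j)) = Finset.univ.image μ := by
            rw [show (fun j => μ (π j)) = μ ∘ π from rfl, ← Finset.image_image,
              Finset.image_univ_of_surjective hπ.2]
          rw [himg, Finset.card_image_of_injective _ hμ.2.injective]
          simp
        · intro σ hσ
          rw [Finset.mem_product]
          constructor
          · rw [Finset.mem_filter]
            exact ⟨Finset.mem_univ _, ((Finset.univ.image σ).orderEmbOfFin _).strictMono⟩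
          · rw [Finset.mem_filter]
            refine ⟨Finset.mem_univ _, fun i => ?_⟩
            set h := (Finset.mem_filter.mp hσ).2
            set s := Finset.univ.image σ
            have hmem : ((s.orderIsoOfFin h) i : Fin n) ∈ s := ((s.orderIsoOfFin h) i).2
            obtain ⟨j, _, hj⟩ := Finset.mem_image.mp hmem
            refine ⟨j, ?_⟩
            have heq : (⟨σ j, Finset.mem_image_of_mem σ (Finset.mem_univ j)⟩ : {x // x ∈ s})
                = (s.orderIsoOfFin h) i := Subtype.ext hj
            show (s.orderIsoOfFin h).symm ⟨σ j, Finset.mem_image_of_mem σ (Finset.mem_univ j)⟩ = i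
            rw [heq, OrderIso.symm_apply_apply]
        · rintro ⟨μ, π⟩ ha
          rw [Finset.mem_product] at ha
          obtain ⟨hμ, hπ⟩ := ha
          rw [Finset.mem_filter] at hμ hπ
          have hμs := hμ.2
          have hπs := hπ.2
          have himg : Finset.univ.image (fun j => μ (π j)) = Finset.univ.image μ := by
            rw [show (fun j => μ (π j)) = μ ∘ π from rfl, ← Finset.image_image,
              Finset.image_univ_of_surjective hπs]
          have hcard : (Finset.univ.image (fun j => μ (π j))).card = u := by
            rw [himg, Finset.card_image_of_injective _ hμs.injective]; simp
          have hμeq : μ = ((Finset.univ.image (fun j => μ (π j))).orderEmbOfFin hcard :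
              Fin u → Fin n) := by
            refine Finset.orderEmbOfFin_unique hcard (fun i => ?_) hμs
            rw [himg]
            exact Finset.mem_image_of_mem μ (Finset.mem_univ i)
          ext : 1
          · exact hμeq.symm
          · simp only
            funext j
            set s := Finset.univ.image (fun j => μ (π j))
            have : (⟨μ (π j), Finset.mem_image_of_mem _ (Finset.mem_univ j)⟩ : {x // x ∈ s})
                = (s.orderIsoOfFin hcard) (π j) := by
              apply Subtype.ext
              rw [Finset.coe_orderIsoOfFin_apply]
              exact congrFun hμeq (π j)
            rw [this, OrderIso.symm_apply_apply]
        · intro σ hσ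
          funext j
          simp only
          rw [← Finset.coe_orderIsoOfFin_apply, OrderIso.apply_symm_apply]
        · intros; rfl
    _ = ∑ σ : Fin k → Fin n, F σ := by
        rw [Finset.sum_fiberwise_eq_sum_filter]
        congr 1
        rw [Finset.filter_true_of_mem]
        intro σ _
        rw [Finset.mem_Icc]
        constructor
        · rw [Nat.one_le_iff_ne_zero]
          haveI : Nonempty (Fin k) := ⟨⟨0, hk⟩⟩
          exact Finset.card_ne_zero.mpr ((Finset.univ_nonempty (α := Fin k)).image σ)
        · calc (Finset.univ.image σ).card ≤ (Finset.univ : Finset (Fin k)).card :=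
                Finset.card_image_le
            _ = k := by simp

/-- Kronecker-power multinomial theorem:
`(x_1 + ⋯ + x_n)^{⊗k} = Σ_{u=1}^{k} Σ_{λ ∈ C(k,u)} Σ_{μ ∈ W(n,u)} Σ_{π ∈ 𝔖(λ)}
x_{μ_{π_1}} ⊗ ⋯ ⊗ x_{μ_{π_k}}`, where `C(k,u)` is the set of `u`-compositions of
`k` (all parts `≥ 1`), `W(n,u)` the set of strictly increasing `u`-tuples in
`{1,…,n}`, and `𝔖(λ)` the set of permutations of the multiset with
multiplicities `λ`. -/
theorem kronecker_multinomial {p q n : ℕ} (k : ℕ) (hk : 0 < k)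
    (x : Fin n → Matrix (Fin p) (Fin q) ℝ) :
    kronPow k (∑ i, x i) =
      ∑ u ∈ Finset.Icc 1 k,
        ∑ lam ∈ (Finset.Nat.antidiagonalTuple u k).filter fun lam => ∀ i, 1 ≤ lam i,
          ∑ μ ∈ Finset.univ.filter fun μ : Fin u → Fin n => StrictMono μ,
            ∑ π ∈ Finset.univ.filter
                (fun π : Fin k → Fin u =>
                  ∀ i, (Finset.univ.filter fun j => π j = i).card = lam i),
              Matrix.of fun f g => ∏ j, x (μ (π j)) (f j) (g j) := by
  have h := key_sum hk (fun σ : Fin k → Fin n =>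
    (Matrix.of fun f g => ∏ j, x (σ j) (f j) (g j) :
      Matrix (Fin k → Fin p) (Fin k → Fin q) ℝ))
  beta_reduce at h
  rw [h]
  ext f g
  simp only [kronPow, Matrix.sum_apply, Matrix.of_apply, Matrix.sum_apply]
  rw [Finset.prod_univ_sum]
  simp [Fintype.piFinset_univ]
end

section
/- Let X = (X_{ij}) be an M_{p,q}(ℝ)-valued random variable with square-integrable entries whose distribution is invariant under left multiplication by every orthogonal matrix in O(p). Then for all row indices j, l ∈ {1,…,p} and column indices i, k ∈ {1,…,q}, E(X_{ji} X_{lk}) = δ_{jl} · E(X_{1i} X_{1k}); in particular entries from different rows are uncorrelated and all rows have the same second-moment matrix. -/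
/-!
Signed permutation matrices are orthogonal. Left multiplication by the permutation matrix of the
transposition `(1 j)` moves row `j` to row `1` without changing the law of `X`, so all rows share
the second-moment matrix of the first. For `j ≠ l`, the diagonal matrix negating row `j` flips the
sign of `X_{ji} X_{lk}` without changing its law, so `E(X_{ji} X_{lk}) = 0`.
-/

open Matrix MeasureTheory
open scoped ProbabilityTheory

/-- Matrices carry the product measurable structure of their entries. -/
instance {m n : Type*} : MeasurableSpace (Matrix m n ℝ) := MeasurableSpace.pi

namespace Matrix

variable {n R : Type*} [Fintype n] [DecidableEq n] [CommRing R] [StarRing R]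

lemma permMatrix_mem_unitaryGroup (σ : Equiv.Perm n) : σ.permMatrix R ∈ unitaryGroup n R := by
  rw [mem_unitaryGroup_iff, star_eq_conjTranspose, conjTranspose_permMatrix, ← permMatrix_mul,
    inv_mul_cancel, permMatrix_one]

lemma diagonal_mem_unitaryGroup {d : n → R} (hd : ∀ i, d i * star (d i) = 1) :
    diagonal d ∈ unitaryGroup n R := by
  rw [mem_unitaryGroup_iff, star_eq_conjTranspose, diagonal_conjTranspose, diagonal_mul_diagonal,
    ← diagonal_one]
  exact congrArg diagonal (funext hd)

lemma measurable_mul_left {l m : Type*} [Fintype l] (A : Matrix l l ℝ) :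
    Measurable fun M : Matrix l m ℝ => A * M := by
  refine measurable_pi_lambda _ fun a => measurable_pi_lambda _ fun i => ?_
  simp only [mul_apply]
  fun_prop

end Matrix

section SecondMoments

variable {m n Ω : Type*} [Fintype m] [MeasurableSpace Ω] {μ : Measure Ω}
  {X : Ω → Matrix m n ℝ}

lemma integral_entry_mul_entry_of_map_mul_left_eq (hX : Measurable X) {A : Matrix m m ℝ}
    (hA : μ.map (fun ω => A * X ω) = μ.map X) (a b : m) (i k : n) :
    ∫ ω, (A * X ω) a i * (A * X ω) b k ∂μ = ∫ ω, X ω a i * X ω b k ∂μ := by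
  have hf : Measurable fun M : Matrix m n ℝ => M a i * M b k := by fun_prop
  calc ∫ ω, (A * X ω) a i * (A * X ω) b k ∂μ
      = ∫ M, M a i * M b k ∂(μ.map fun ω => A * X ω) :=
        (integral_map ((measurable_mul_left A).comp hX).aemeasurable hf.aestronglyMeasurable).symm
    _ = ∫ M, M a i * M b k ∂(μ.map X) := by rw [hA]
    _ = ∫ ω, X ω a i * X ω b k ∂μ := integral_map hX.aemeasurable hf.aestronglyMeasurable

variable [DecidableEq m]

lemma integral_entry_mul_entry_perm (hX : Measurable X) (σ : Equiv.Perm m)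
    (hσ : μ.map (fun ω => σ.permMatrix ℝ * X ω) = μ.map X) (a b : m) (i k : n) :
    ∫ ω, X ω (σ a) i * X ω (σ b) k ∂μ = ∫ ω, X ω a i * X ω b k ∂μ := by
  simpa only [PEquiv.toMatrix_toPEquiv_mul, submatrix_apply, id] using
    integral_entry_mul_entry_of_map_mul_left_eq hX hσ a b i k

lemma integral_entry_mul_entry_eq_zero_of_ne (hX : Measurable X) {a b : m} (hab : a ≠ b)
    (hflip : μ.map (fun ω => diagonal (Function.update (1 : m → ℝ) a (-1)) * X ω) = μ.map X)
    (i k : n) :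
    ∫ ω, X ω a i * X ω b k ∂μ = 0 := by
  have h := integral_entry_mul_entry_of_map_mul_left_eq hX hflip a b i k
  simp only [diagonal_mul, Function.update_self, Function.update_of_ne hab.symm, Pi.one_apply,
    one_mul, neg_mul, integral_neg] at h
  linarith

end SecondMoments

theorem radial_second_moments_general {p q : ℕ} (hp : 0 < p) {Ω : Type*} [MeasureSpace Ω]
    (X : Ω → Matrix (Fin p) (Fin q) ℝ) (hX : Measurable X)
    (hinv : ∀ A : Matrix (Fin p) (Fin p) ℝ, A ∈ Matrix.orthogonalGroup (Fin p) ℝ →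
      Measure.map (fun ω => A * X ω) (ℙ : Measure Ω) = Measure.map X (ℙ : Measure Ω)) :
    ∀ (j l : Fin p) (i k : Fin q),
      ∫ ω, X ω j i * X ω l k =
        (if j = l then 1 else 0) * ∫ ω, X ω ⟨0, hp⟩ i * X ω ⟨0, hp⟩ k := by
  intro j l i k
  split_ifs with hjl
  · subst hjl
    have hswap := integral_entry_mul_entry_perm hX (Equiv.swap ⟨0, hp⟩ j)
      (hinv _ (permMatrix_mem_unitaryGroup _)) ⟨0, hp⟩ ⟨0, hp⟩ i k
    rw [one_mul, ← hswap, Equiv.swap_apply_left]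
  · rw [zero_mul]
    refine integral_entry_mul_entry_eq_zero_of_ne hX hjl
      (hinv _ (diagonal_mem_unitaryGroup fun r => ?_)) i k
    by_cases hr : r = j <;> simp [hr]

/-- If the distribution of an `M_{p,q}(ℝ)`-valued random variable `X` with
square-integrable entries is invariant under left multiplication by `O(p)`,
then `E(X_{ji} X_{lk}) = δ_{jl} E(X_{1i} X_{1k})`. -/
theorem radial_second_moments {p q : ℕ} (hp : 0 < p) {Ω : Type*} [MeasureSpace Ω]
    (hprob : IsProbabilityMeasure (ℙ : Measure Ω))
    (X : Ω → Matrix (Fin p) (Fin q) ℝ) (hX : Measurable X)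
    (hL2 : ∀ j i, MemLp (fun ω => X ω j i) 2 ℙ)
    (hinv : ∀ A : Matrix (Fin p) (Fin p) ℝ, A ∈ Matrix.orthogonalGroup (Fin p) ℝ →
      Measure.map (fun ω => A * X ω) (ℙ : Measure Ω) = Measure.map X (ℙ : Measure Ω)) :
    ∀ (j l : Fin p) (i k : Fin q),
      ∫ ω, X ω j i * X ω l k =
        (if j = l then 1 else 0) * ∫ ω, X ω ⟨0, hp⟩ i * X ω ⟨0, hp⟩ k :=
  radial_second_moments_general hp X hX hinv
end

section
/- Let ν be a probability measure on [0,∞) admitting a moment of order k = |κ|, and for each p let ν_p be the unique rotation-invariant probability measure on ℝ^p whose radial part (pushforward under the Euclidean norm) is ν. If κ ∈ ℕ_0^p has all components even and |κ| = 2l, then m_κ(ν_p) = O(p^{-l}) as p → ∞; if some component of κ is odd, then m_κ(ν_p) = 0. -/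
/-!
Reflecting one coordinate shows that every moment in which that coordinate has odd degree
vanishes. For even `κ`, weighted AM-GM and the invariance under coordinate permutations bound
`m_κ(ν_p)` by the coordinate moment `E[x_a^{2l}]`.

To see that `E[x_a^{2l}]` is of order `p^{-l} E[|x|^{2l}]`, rotate the `(a, b)`-plane by `π/4`:
`E[x_a^{2j} |x|^{2k}]` becomes `2^{-j} E[(x_a + x_b)^{2j} |x|^{2k}]`, and expanding the binomial
(odd terms vanish, mixed even terms are dominated by `E[x_a^{2j-2} x_b^2 |x|^{2k}]`) gives
`E[x_a^{2j} |x|^{2k}] ≤ 4^j E[x_a^{2j-2} x_b^2 |x|^{2k}]`. As all `p - 1` coordinates `b ≠ a`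
contribute equally to `E[x_a^{2j-2} |x|^{2k+2}] = ∑_i E[x_a^{2j-2} x_i^2 |x|^{2k}]`, trading
`x_a^2` for `|x|^2` gains a factor `p - 1`; after `l` trades
`(p - 1)^l E[x_a^{2l}] ≤ 4^{l^2} E[|x|^{2l}] = 4^{l^2} ∫ t^{2l} dν`.
-/

open MeasureTheory Matrix Finset

theorem pow_succ_mul_pow_succ_le {u v : ℝ} (hu : 0 ≤ u) (hv : 0 ≤ v) (i d : ℕ) :
    u ^ (i + 1) * v ^ (d + 1) ≤ u ^ (i + d + 1) * v + u * v ^ (i + d + 1) := by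
  rcases le_total u v with h | h
  · calc u ^ (i + 1) * v ^ (d + 1) = u * u ^ i * v ^ (d + 1) := by ring
      _ ≤ u * v ^ i * v ^ (d + 1) := by gcongr
      _ = u * v ^ (i + d + 1) := by ring
      _ ≤ _ := le_add_of_nonneg_left (by positivity)
  · calc u ^ (i + 1) * v ^ (d + 1) = u ^ (i + 1) * v ^ d * v := by ring
      _ ≤ u ^ (i + 1) * u ^ d * v := by gcongr
      _ = u ^ (i + d + 1) * v := by ring
      _ ≤ _ := le_add_of_nonneg_right (by positivity)

theorem prod_pow_le_sum_mul_pow {ι : Type*} (s : Finset ι) (β : ι → ℕ) {z : ι → ℝ}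
    (hz : ∀ i ∈ s, 0 ≤ z i) {l : ℕ} (hl : 0 < l) (hβ : ∑ i ∈ s, β i = l) :
    ∏ i ∈ s, z i ^ β i ≤ ∑ i ∈ s, (β i / l : ℝ) * z i ^ l := by
  have hw : ∑ i ∈ s, (β i / l : ℝ) = 1 := by
    rw [← sum_div, ← Nat.cast_sum, hβ, div_self (by positivity)]
  refine le_of_eq_of_le (prod_congr rfl fun i hi => ?_)
    (Real.geom_mean_le_arith_mean_weighted s (fun i => (β i / l : ℝ)) (fun i => z i ^ l)
      (fun i _ => by positivity) hw fun i hi => pow_nonneg (hz i hi) l)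
  rw [← Real.rpow_natCast (z i) l, ← Real.rpow_mul (hz i hi), mul_div_cancel₀ _ (by positivity),
    Real.rpow_natCast]

namespace Matrix

variable {n : Type*} [Fintype n] [DecidableEq n]

noncomputable def householder (v : n → ℝ) : Matrix n n ℝ :=
  1 - (2 / (v ⬝ᵥ v)) • vecMulVec v v

theorem householder_mulVec (v x : n → ℝ) :
    householder v *ᵥ x = x - (2 / (v ⬝ᵥ v) * (v ⬝ᵥ x)) • v := by
  ext i
  simp [householder, sub_mulVec, smul_mulVec, vecMulVec_mulVec, mul_assoc]

theorem householder_mem_orthogonalGroup {v : n → ℝ} (hv : v ⬝ᵥ v ≠ 0) :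
    householder v ∈ orthogonalGroup n ℝ := by
  have hT : (householder v)ᵀ = householder v := by
    simp [householder, transpose_sub, transpose_smul, transpose_vecMulVec]
  have hcoeff : 2 / (v ⬝ᵥ v) * (2 / (v ⬝ᵥ v)) * (v ⬝ᵥ v) = 2 / (v ⬝ᵥ v) + 2 / (v ⬝ᵥ v) := by
    field_simp; ring
  rw [mem_orthogonalGroup_iff, hT, householder, sub_mul, mul_sub, mul_sub, smul_mul_smul,
    vecMulVec_mul_vecMulVec, vecMulVec_smul, smul_smul, hcoeff, add_smul]
  simp only [mul_one, one_mul]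
  abel

theorem householder_single_mulVec (a : n) (x : n → ℝ) :
    householder (Pi.single a 1) *ᵥ x = Function.update x a (-x a) := by
  ext i
  rcases eq_or_ne i a with rfl | hi
  · simp [householder_mulVec]; ring
  · simp [householder_mulVec, hi]

theorem exists_mem_orthogonalGroup_mulVec_apply (a : n) {w : n → ℝ} (hw : w ⬝ᵥ w = 1)
    (ha : w a ≠ 1) : ∃ A ∈ orthogonalGroup n ℝ, ∀ x, (A *ᵥ x) a = w ⬝ᵥ x := by
  set v := Pi.single a 1 - w
  have hvv : v ⬝ᵥ v = 2 * (1 - w a) := by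
    simp [v, dotProduct_comm w, hw]
    ring
  have hwa : 1 - w a ≠ 0 := sub_ne_zero.mpr (Ne.symm ha)
  refine ⟨householder v, householder_mem_orthogonalGroup (by rw [hvv]; positivity), fun x => ?_⟩
  rw [householder_mulVec, hvv]
  simp [v]
  field_simp
  ring

theorem permMatrix_mem_orthogonalGroup (σ : Equiv.Perm n) :
    σ.permMatrix ℝ ∈ orthogonalGroup n ℝ := by
  rw [mem_orthogonalGroup_iff, transpose_permMatrix, ← permMatrix_mul, inv_mul_cancel,
    permMatrix_one]

theorem dotProduct_mulVec_self_of_mem_orthogonalGroup {A : Matrix n n ℝ}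
    (hA : A ∈ orthogonalGroup n ℝ) (x : n → ℝ) : (A *ᵥ x) ⬝ᵥ (A *ᵥ x) = x ⬝ᵥ x := by
  rw [dotProduct_mulVec, ← vecMul_transpose, vecMul_vecMul,
    (mem_orthogonalGroup_iff' n ℝ).mp hA, vecMul_one]

end Matrix

section Moments

variable {n : Type*} [Fintype n]

theorem dotProduct_self_nonneg (x : n → ℝ) : 0 ≤ x ⬝ᵥ x :=
  sum_nonneg fun i _ => mul_self_nonneg (x i)

theorem sq_le_dotProduct_self (x : n → ℝ) (a : n) : x a ^ 2 ≤ x ⬝ᵥ x :=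
  (sq (x a)).trans_le
    (single_le_sum (f := fun i => x i * x i) (fun i _ => mul_self_nonneg (x i)) (mem_univ a))

theorem abs_apply_le_sqrt_dotProduct_self (x : n → ℝ) (a : n) : |x a| ≤ √(x ⬝ᵥ x) :=
  Real.abs_le_sqrt (sq_le_dotProduct_self x a)

theorem abs_pow_mul_pow_mul_dotProduct_self_pow_le {l r s k : ℕ} (h : r + s + 2 * k = 2 * l)
    (x : n → ℝ) (a b : n) : |x a ^ r * x b ^ s * (x ⬝ᵥ x) ^ k| ≤ (x ⬝ᵥ x) ^ l := by
  have hx := dotProduct_self_nonneg x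
  set N := √(x ⬝ᵥ x)
  calc |x a ^ r * x b ^ s * (x ⬝ᵥ x) ^ k| = |x a| ^ r * |x b| ^ s * (N ^ 2) ^ k := by
        rw [Real.sq_sqrt hx, abs_mul, abs_mul, abs_pow, abs_pow, abs_of_nonneg (pow_nonneg hx k)]
    _ ≤ N ^ r * N ^ s * (N ^ 2) ^ k := by
        gcongr <;> exact abs_apply_le_sqrt_dotProduct_self x _
    _ = (N ^ 2) ^ l := by rw [← pow_add, ← pow_mul, ← pow_add, ← pow_mul, h]
    _ = (x ⬝ᵥ x) ^ l := by rw [Real.sq_sqrt hx]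

theorem sqrt_sum_sq_pow_two_mul (x : n → ℝ) (l : ℕ) :
    √(∑ i, x i ^ 2) ^ (2 * l) = (x ⬝ᵥ x) ^ l := by
  rw [pow_mul, Real.sq_sqrt (sum_nonneg fun i _ => sq_nonneg (x i))]
  simp [dotProduct, sq]

theorem integral_dotProduct_self_pow_of_map {μ : Measure (n → ℝ)} {ν : Measure ℝ}
    (hmap : μ.map (fun x => √(∑ i, x i ^ 2)) = ν) (l : ℕ) :
    ∫ x, (x ⬝ᵥ x) ^ l ∂μ = ∫ t, t ^ (2 * l) ∂ν := by
  rw [← hmap, integral_map (Continuous.aemeasurable (by fun_prop)) (by fun_prop)]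
  simp only [sqrt_sum_sq_pow_two_mul]

theorem integrable_dotProduct_self_pow_of_map {μ : Measure (n → ℝ)} {ν : Measure ℝ}
    (hmap : μ.map (fun x => √(∑ i, x i ^ 2)) = ν) {l : ℕ}
    (hmom : Integrable (fun t => t ^ (2 * l)) ν) : Integrable (fun x => (x ⬝ᵥ x) ^ l) μ := by
  rw [← hmap, integrable_map_measure (by fun_prop) (Continuous.aemeasurable (by fun_prop))]
    at hmom
  simpa only [Function.comp_def, sqrt_sum_sq_pow_two_mul] using hmom

noncomputable def pairMoment (μ : Measure (n → ℝ)) (a b : n) (r s k : ℕ) : ℝ :=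
  ∫ x, x a ^ r * x b ^ s * (x ⬝ᵥ x) ^ k ∂μ

section PairMoment

variable {μ : Measure (n → ℝ)} {l : ℕ}

theorem continuous_pow_mul_pow_mul_dotProduct_self_pow (a b : n) (r s k : ℕ) :
    Continuous fun x : n → ℝ => x a ^ r * x b ^ s * (x ⬝ᵥ x) ^ k := by
  fun_prop

theorem integrable_pow_mul_pow_mul_dotProduct_self_pow
    (hR : Integrable (fun x => (x ⬝ᵥ x) ^ l) μ) {r s k : ℕ} (h : r + s + 2 * k = 2 * l)
    (a b : n) : Integrable (fun x => x a ^ r * x b ^ s * (x ⬝ᵥ x) ^ k) μ :=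
  hR.mono' (continuous_pow_mul_pow_mul_dotProduct_self_pow a b r s k).aestronglyMeasurable
    (.of_forall fun x => abs_pow_mul_pow_mul_dotProduct_self_pow_le h x a b)

theorem pairMoment_nonneg (a b : n) {r s : ℕ} (hr : Even r) (hs : Even s) (k : ℕ) :
    0 ≤ pairMoment μ a b r s k :=
  integral_nonneg fun x => mul_nonneg (mul_nonneg (hr.pow_nonneg _) (hs.pow_nonneg _))
    (pow_nonneg (dotProduct_self_nonneg x) k)

end PairMoment

variable [DecidableEq n]

def OrthogonallyInvariant (μ : Measure (n → ℝ)) : Prop :=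
  ∀ A : Matrix n n ℝ, A ∈ orthogonalGroup n ℝ → μ.map (fun x => A *ᵥ x) = μ

namespace OrthogonallyInvariant

variable {μ : Measure (n → ℝ)} (hμ : OrthogonallyInvariant μ)
include hμ

theorem integral_comp_mulVec {A : Matrix n n ℝ} (hA : A ∈ orthogonalGroup n ℝ)
    {f : (n → ℝ) → ℝ} (hf : AEStronglyMeasurable f μ) :
    ∫ x, f (A *ᵥ x) ∂μ = ∫ x, f x ∂μ := by
  have hA' : Continuous fun x : n → ℝ => A *ᵥ x := continuous_const.matrix_mulVec continuous_id
  conv_rhs => rw [← hμ A hA]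
  exact (integral_map hA'.aemeasurable (by rwa [hμ A hA])).symm

theorem integral_comp_perm (σ : Equiv.Perm n) {f : (n → ℝ) → ℝ}
    (hf : AEStronglyMeasurable f μ) : ∫ x, f (x ∘ σ) ∂μ = ∫ x, f x ∂μ := by
  simpa [permMatrix_mulVec] using
    hμ.integral_comp_mulVec (permMatrix_mem_orthogonalGroup σ) hf

theorem integral_eq_zero_of_neg_apply (a : n) {f : (n → ℝ) → ℝ}
    (hf : AEStronglyMeasurable f μ) (hodd : ∀ x, f (Function.update x a (-x a)) = -f x) :
    ∫ x, f x ∂μ = 0 := by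
  have h := hμ.integral_comp_mulVec (householder_mem_orthogonalGroup (v := Pi.single a 1)
    (by simp)) hf
  simp only [householder_single_mulVec, hodd, integral_neg] at h
  linarith

end OrthogonallyInvariant

section PairMomentInvariance

variable {μ : Measure (n → ℝ)} (hμ : OrthogonallyInvariant μ)
include hμ

theorem pairMoment_perm (σ : Equiv.Perm n) (a b : n) (r s k : ℕ) :
    pairMoment μ (σ a) (σ b) r s k = pairMoment μ a b r s k := by
  have h := hμ.integral_comp_perm σ
    (continuous_pow_mul_pow_mul_dotProduct_self_pow a b r s k).aestronglyMeasurable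
  simpa [pairMoment, dotProduct, Equiv.sum_comp σ (fun i => _ * _)] using h

theorem pairMoment_comm (a b : n) (r s k : ℕ) :
    pairMoment μ a b r s k = pairMoment μ a b s r k := by
  rw [← pairMoment_perm hμ (Equiv.swap a b), Equiv.swap_apply_left, Equiv.swap_apply_right]
  exact integral_congr_ae (.of_forall fun x => by ring)

theorem pairMoment_eq_zero_of_odd {a b : n} (hab : a ≠ b) {r : ℕ} (hr : Odd r) (s k : ℕ) :
    pairMoment μ a b r s k = 0 := by
  refine hμ.integral_eq_zero_of_neg_apply a
    (continuous_pow_mul_pow_mul_dotProduct_self_pow a b r s k).aestronglyMeasurable fun x => ?_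
  rw [← householder_single_mulVec, dotProduct_mulVec_self_of_mem_orthogonalGroup
    (householder_mem_orthogonalGroup (by simp)), householder_single_mulVec,
    Function.update_self, Function.update_of_ne hab.symm, hr.neg_pow]
  ring

end PairMomentInvariance

section Chain

variable {μ : Measure (n → ℝ)} {l : ℕ} (hμ : OrthogonallyInvariant μ)
  (hR : Integrable (fun x => (x ⬝ᵥ x) ^ l) μ)
include hμ hR

theorem two_pow_mul_pairMoment_eq_sum {a b : n} (hab : a ≠ b) {j k : ℕ} (hjk : j + k = l) :
    2 ^ j * pairMoment μ a b (2 * j) 0 k =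
      ∑ r ∈ range (2 * j + 1), ((2 * j).choose r : ℝ) * pairMoment μ a b r (2 * j - r) k := by
  set c : ℝ := (√2)⁻¹
  have hc : c ^ 2 = 2⁻¹ := by rw [inv_pow, Real.sq_sqrt zero_le_two]
  set w : n → ℝ := c • (Pi.single a 1 + Pi.single b 1)
  have hw : w ⬝ᵥ w = 1 := by
    simp [w, hab, hab.symm, ← sq, hc]; norm_num
  have hwa : w a ≠ 1 := by
    simp [w, hab.symm, c]
  obtain ⟨A, hA, hAx⟩ := exists_mem_orthogonalGroup_mulVec_apply a hw hwa
  have h := hμ.integral_comp_mulVec hA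
    (continuous_pow_mul_pow_mul_dotProduct_self_pow a b (2 * j) 0 k).aestronglyMeasurable
  simp only [hAx, dotProduct_mulVec_self_of_mem_orthogonalGroup hA] at h
  have hwx : ∀ x, w ⬝ᵥ x = c * (x a + x b) := fun x => by simp [w, mul_add]
  have hexpand : ∀ x : n → ℝ, (w ⬝ᵥ x) ^ (2 * j) * (A *ᵥ x) b ^ 0 * (x ⬝ᵥ x) ^ k =
      2⁻¹ ^ j * ∑ r ∈ range (2 * j + 1),
        ((2 * j).choose r : ℝ) * (x a ^ r * x b ^ (2 * j - r) * (x ⬝ᵥ x) ^ k) := fun x => by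
    rw [hwx, mul_pow, pow_mul, hc, add_pow, pow_zero, mul_one, mul_assoc, sum_mul]
    congr 1
    exact sum_congr rfl fun r _ => by ring
  have hint : ∀ r ∈ range (2 * j + 1), Integrable (fun x : n → ℝ =>
      ((2 * j).choose r : ℝ) * (x a ^ r * x b ^ (2 * j - r) * (x ⬝ᵥ x) ^ k)) μ :=
    fun r hr => (integrable_pow_mul_pow_mul_dotProduct_self_pow hR
      (by have := mem_range.mp hr; omega) a b).const_mul _
  simp only [hexpand, integral_const_mul, integral_finsetSum _ hint] at h
  rw [pairMoment, ← h, ← mul_assoc, ← mul_pow, mul_inv_cancel₀ two_ne_zero, one_pow, one_mul]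
  rfl

theorem pairMoment_even_le (a b : n) (i d : ℕ) {k : ℕ} (h : i + d + 2 + k = l) :
    pairMoment μ a b (2 * (i + 1)) (2 * (d + 1)) k ≤
      2 * pairMoment μ a b (2 * (i + d + 1)) 2 k := by
  have hint := fun r s (h : r + s + 2 * k = 2 * l) =>
    integrable_pow_mul_pow_mul_dotProduct_self_pow hR h a b
  calc pairMoment μ a b (2 * (i + 1)) (2 * (d + 1)) k
      ≤ pairMoment μ a b (2 * (i + d + 1)) 2 k + pairMoment μ a b 2 (2 * (i + d + 1)) k := by
        unfold pairMoment
        rw [← integral_add (hint _ _ (by omega)) (hint _ _ (by omega))]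
        refine integral_mono (hint _ _ (by omega))
          ((hint _ _ (by omega)).add (hint _ _ (by omega))) fun x => ?_
        have := pow_succ_mul_pow_succ_le (sq_nonneg (x a)) (sq_nonneg (x b)) i d
        simp only [← pow_mul] at this
        rw [← add_mul]
        exact mul_le_mul_of_nonneg_right this (pow_nonneg (dotProduct_self_nonneg x) k)
    _ = 2 * pairMoment μ a b (2 * (i + d + 1)) 2 k := by
        rw [pairMoment_comm hμ a b 2]; ring

theorem pairMoment_le_two_mul {a b : n} (hab : a ≠ b) {r j k : ℕ} (hr0 : 0 < r)
    (hr : r < 2 * (j + 1)) (h : j + 1 + k = l) :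
    pairMoment μ a b r (2 * (j + 1) - r) k ≤ 2 * pairMoment μ a b (2 * j) 2 k := by
  rcases Nat.even_or_odd r with ⟨m, rfl⟩ | hodd
  · obtain ⟨i, rfl⟩ : ∃ i, m = i + 1 := ⟨m - 1, by omega⟩
    obtain ⟨d, rfl⟩ : ∃ d, j = i + d + 1 := ⟨j - i - 1, by omega⟩
    rw [← two_mul, show 2 * (i + d + 1 + 1) - 2 * (i + 1) = 2 * (d + 1) by omega]
    exact pairMoment_even_le hμ hR a b i d (by omega)
  · rw [pairMoment_eq_zero_of_odd hμ hab hodd]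
    have := pairMoment_nonneg (μ := μ) a b (even_two_mul j) even_two k
    linarith

theorem pairMoment_le_four_pow_mul {a b : n} (hab : a ≠ b) {j k : ℕ} (h : j + 1 + k = l) :
    pairMoment μ a b (2 * (j + 1)) 0 k ≤ 4 ^ (j + 1) * pairMoment μ a b (2 * j) 2 k := by
  have hU := pairMoment_nonneg (μ := μ) a b (even_two_mul j) even_two k
  rcases j with _ | j
  · rw [pairMoment_comm hμ]
    norm_num at hU ⊢
    linarith
  set S := pairMoment μ a b (2 * (j + 2)) 0 k
  set U := pairMoment μ a b (2 * (j + 1)) 2 k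
  -- The end terms of the binomial expansion are `S`; every other one is at most `C(2j+4, r) 2U`.
  have hterm : ∀ r ∈ range (2 * (j + 2) + 1),
      ((2 * (j + 2)).choose r : ℝ) * pairMoment μ a b r (2 * (j + 2) - r) k ≤
        ((if r = 0 then S else 0) + if r = 2 * (j + 2) then S else 0) +
          ((2 * (j + 2)).choose r : ℝ) * (2 * U) := by
    intro r hr
    have hC : (0 : ℝ) ≤ ((2 * (j + 2)).choose r : ℝ) * (2 * U) := by positivity
    by_cases h0 : r = 0
    · subst h0
      rw [pairMoment_comm hμ]
      simp [S]
      linarith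
    by_cases htop : r = 2 * (j + 2)
    · subst htop
      simp [S]
      linarith
    rw [if_neg h0, if_neg htop, zero_add, zero_add]
    gcongr
    exact pairMoment_le_two_mul hμ hR hab (Nat.pos_of_ne_zero h0)
      (by have := mem_range.mp hr; omega) h
  have hsum := sum_le_sum hterm
  rw [← two_pow_mul_pairMoment_eq_sum hμ hR hab (by omega), sum_add_distrib, sum_add_distrib,
    sum_ite_eq', sum_ite_eq', ← sum_mul, ← Nat.cast_sum, Nat.sum_range_choose] at hsum
  have hS := pairMoment_nonneg (μ := μ) a b (even_two_mul (j + 2)) Even.zero k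
  have h4 : (4 : ℝ) ≤ 2 ^ (j + 2) := by
    rw [pow_add]; norm_num; exact one_le_pow₀ one_le_two
  simp only [mem_range, lt_add_one, if_true, Nat.cast_pow, Nat.cast_ofNat, pow_mul] at hsum
  norm_num at hsum ⊢
  nlinarith

theorem card_sub_one_mul_pairMoment_le {a b : n} (hab : a ≠ b) {j k : ℕ} (h : j + 1 + k = l) :
    ((Fintype.card n : ℝ) - 1) * pairMoment μ a b (2 * (j + 1)) 0 k ≤
      4 ^ (j + 1) * pairMoment μ a b (2 * j) 0 (k + 1) := by
  set U := pairMoment μ a b (2 * j) 2 k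
  have hexpand : pairMoment μ a b (2 * j) 0 (k + 1) = ∑ i, pairMoment μ a i (2 * j) 2 k := by
    unfold pairMoment
    rw [← integral_finsetSum _ fun i _ =>
      integrable_pow_mul_pow_mul_dotProduct_self_pow hR (r := 2 * j) (s := 2) (by omega) a i]
    refine integral_congr_ae (.of_forall fun x => ?_)
    simp only [pow_succ _ k, pow_zero, mul_one, dotProduct, mul_sum]
    exact sum_congr rfl fun i _ => by ring
  have hoff : ((Fintype.card n : ℝ) - 1) * U ≤ pairMoment μ a b (2 * j) 0 (k + 1) := by
    have hsame : ∀ i ∈ univ.erase a, pairMoment μ a i (2 * j) 2 k = U := fun i hi => by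
      have := pairMoment_perm hμ (Equiv.swap i b) a i (2 * j) 2 k
      rw [Equiv.swap_apply_of_ne_of_ne (ne_of_mem_erase hi).symm hab, Equiv.swap_apply_left]
        at this
      exact this.symm
    rw [hexpand, ← sum_erase_add _ _ (mem_univ a), sum_congr rfl hsame, sum_const,
      card_erase_of_mem (mem_univ a), card_univ, nsmul_eq_mul,
      Nat.cast_sub (Fintype.card_pos_iff.mpr ⟨a⟩), Nat.cast_one]
    exact le_add_of_nonneg_right (pairMoment_nonneg a a (even_two_mul j) even_two k)
  have hcard : (0 : ℝ) ≤ (Fintype.card n : ℝ) - 1 :=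
    sub_nonneg.mpr (Nat.one_le_cast.mpr (Fintype.card_pos_iff.mpr ⟨a⟩))
  calc ((Fintype.card n : ℝ) - 1) * pairMoment μ a b (2 * (j + 1)) 0 k
      ≤ ((Fintype.card n : ℝ) - 1) * (4 ^ (j + 1) * U) :=
        mul_le_mul_of_nonneg_left (pairMoment_le_four_pow_mul hμ hR hab h) hcard
    _ = 4 ^ (j + 1) * (((Fintype.card n : ℝ) - 1) * U) := by ring
    _ ≤ 4 ^ (j + 1) * pairMoment μ a b (2 * j) 0 (k + 1) := by gcongr

theorem card_sub_one_pow_mul_pairMoment_le {a b : n} (hab : a ≠ b) (j : ℕ) {k : ℕ}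
    (h : j + k = l) : ((Fintype.card n : ℝ) - 1) ^ j * pairMoment μ a b (2 * j) 0 k ≤
      (4 ^ l) ^ j * pairMoment μ a b 0 0 l := by
  induction j generalizing k with
  | zero => simp [← h]
  | succ j ih =>
    have hstep := card_sub_one_mul_pairMoment_le hμ hR hab (j := j) (k := k) (by omega)
    have h4 : (4 : ℝ) ^ (j + 1) ≤ 4 ^ l := pow_le_pow_right₀ (by norm_num) (by omega)
    have hcard : (0 : ℝ) ≤ (Fintype.card n : ℝ) - 1 :=
      sub_nonneg.mpr (Nat.one_le_cast.mpr (Fintype.card_pos_iff.mpr ⟨a⟩))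
    calc ((Fintype.card n : ℝ) - 1) ^ (j + 1) * pairMoment μ a b (2 * (j + 1)) 0 k
        = ((Fintype.card n : ℝ) - 1) ^ j *
            (((Fintype.card n : ℝ) - 1) * pairMoment μ a b (2 * (j + 1)) 0 k) := by ring
      _ ≤ ((Fintype.card n : ℝ) - 1) ^ j * (4 ^ (j + 1) * pairMoment μ a b (2 * j) 0 (k + 1)) :=
        mul_le_mul_of_nonneg_left hstep (pow_nonneg hcard j)
      _ = 4 ^ (j + 1) * (((Fintype.card n : ℝ) - 1) ^ j * pairMoment μ a b (2 * j) 0 (k + 1)) := by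
        ring
      _ ≤ 4 ^ l * ((4 ^ l) ^ j * pairMoment μ a b 0 0 l) :=
        mul_le_mul h4 (ih (by omega)) (mul_nonneg (pow_nonneg hcard j)
          (pairMoment_nonneg a b (even_two_mul j) Even.zero _)) (by positivity)
      _ = (4 ^ l) ^ (j + 1) * pairMoment μ a b 0 0 l := by ring

end Chain

section CoordinateMoments

variable {μ : Measure (n → ℝ)} (hμ : OrthogonallyInvariant μ)
include hμ

theorem integral_prod_pow_eq_zero_of_odd (κ : n → ℕ) {i : n} (hi : Odd (κ i)) :
    ∫ x, ∏ j, x j ^ κ j ∂μ = 0 := by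
  refine hμ.integral_eq_zero_of_neg_apply i
    (continuous_finsetProd _ fun j _ => (continuous_apply j).pow _).aestronglyMeasurable
    fun x => ?_
  rw [← mul_prod_erase univ _ (mem_univ i), ← mul_prod_erase univ (fun j => x j ^ κ j) (mem_univ i),
    Function.update_self, hi.neg_pow, neg_mul]
  congr 2
  exact prod_congr rfl fun j hj => by rw [Function.update_of_ne (ne_of_mem_erase hj)]

variable {l : ℕ} (hR : Integrable (fun x => (x ⬝ᵥ x) ^ l) μ)
include hR

theorem integral_prod_pow_le_integral_pow {κ : n → ℕ} (hκ : ∀ i, Even (κ i))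
    (hsum : ∑ i, κ i = 2 * l) (a : n) : ∫ x, ∏ i, x i ^ κ i ∂μ ≤ ∫ x, x a ^ (2 * l) ∂μ := by
  rcases Nat.eq_zero_or_pos l with rfl | hl
  · have hκ0 : ∀ i, κ i = 0 := fun i => by simpa using sum_eq_zero_iff.mp hsum i (mem_univ i)
    simp [hκ0]
  have hcoord : ∀ i, Integrable (fun x : n → ℝ => x i ^ (2 * l)) μ := fun i => by
    simpa using integrable_pow_mul_pow_mul_dotProduct_self_pow hR (s := 0) (k := 0) rfl i i
  have hsame : ∀ i, ∫ x, x i ^ (2 * l) ∂μ = ∫ x, x a ^ (2 * l) ∂μ := fun i => by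
    simpa using hμ.integral_comp_perm (Equiv.swap a i) (hcoord a).aestronglyMeasurable
  choose β hβ using hκ
  have hβsum : ∑ i, β i = l := by
    simp only [hβ, sum_add_distrib] at hsum
    omega
  have hw : ∑ i, (β i / l : ℝ) = 1 := by
    rw [← sum_div, ← Nat.cast_sum, hβsum, div_self (by positivity)]
  have hamgm : ∀ x : n → ℝ, ∏ i, x i ^ κ i ≤ ∑ i, (β i / l : ℝ) * x i ^ (2 * l) := fun x => by
    simpa only [hβ, ← two_mul, pow_mul] using
      prod_pow_le_sum_mul_pow univ β (fun i _ => sq_nonneg (x i)) hl hβsum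
  calc ∫ x, ∏ i, x i ^ κ i ∂μ ≤ ∫ x, ∑ i, (β i / l : ℝ) * x i ^ (2 * l) ∂μ :=
        integral_mono_of_nonneg (.of_forall fun x => prod_nonneg fun i _ => by
            rw [hβ, ← two_mul, pow_mul]; positivity)
          (integrable_finsetSum _ fun i _ => (hcoord i).const_mul _) (.of_forall hamgm)
    _ = ∫ x, x a ^ (2 * l) ∂μ := by
        rw [integral_finsetSum _ fun i _ => (hcoord i).const_mul _]
        simp only [integral_const_mul, hsame, ← sum_mul, hw, one_mul]

theorem card_pow_mul_integral_pow_le (a : n) :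
    (Fintype.card n : ℝ) ^ l * ∫ x, x a ^ (2 * l) ∂μ ≤
      2 ^ l * 4 ^ (l * l) * ∫ x, (x ⬝ᵥ x) ^ l ∂μ := by
  have hM : 0 ≤ ∫ x, (x ⬝ᵥ x) ^ l ∂μ :=
    integral_nonneg fun x => pow_nonneg (dotProduct_self_nonneg x) l
  have hA : 0 ≤ ∫ x, x a ^ (2 * l) ∂μ :=
    integral_nonneg fun x => (even_two_mul l).pow_nonneg _
  by_cases h1 : Fintype.card n ≤ 1
  · have hC : (1 : ℝ) ≤ 2 ^ l * 4 ^ (l * l) :=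
      one_le_mul_of_one_le_of_one_le (one_le_pow₀ one_le_two) (one_le_pow₀ (by norm_num))
    have hcoord : Integrable (fun x : n → ℝ => x a ^ (2 * l)) μ := by
      simpa using integrable_pow_mul_pow_mul_dotProduct_self_pow hR (s := 0) (k := 0) rfl a a
    rw [le_antisymm h1 (Fintype.card_pos_iff.mpr ⟨a⟩), Nat.cast_one, one_pow, one_mul]
    calc ∫ x, x a ^ (2 * l) ∂μ ≤ ∫ x, (x ⬝ᵥ x) ^ l ∂μ :=
          integral_mono hcoord hR fun x => by
            rw [pow_mul]; exact pow_le_pow_left₀ (sq_nonneg _) (sq_le_dotProduct_self x a) l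
      _ ≤ _ := le_mul_of_one_le_left hM hC
  obtain ⟨b, hba⟩ := Fintype.exists_ne_of_one_lt_card (not_le.mp h1) a
  have hchain := card_sub_one_pow_mul_pairMoment_le hμ hR hba.symm l (add_zero l)
  simp only [pairMoment, pow_zero, mul_one, one_mul] at hchain
  have hp : (Fintype.card n : ℝ) ^ l ≤ 2 ^ l * ((Fintype.card n : ℝ) - 1) ^ l := by
    have : (2 : ℝ) ≤ Fintype.card n := by exact_mod_cast not_le.mp h1
    rw [← mul_pow]
    exact pow_le_pow_left₀ (by positivity) (by linarith) l
  calc (Fintype.card n : ℝ) ^ l * ∫ x, x a ^ (2 * l) ∂μ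
      ≤ 2 ^ l * (((Fintype.card n : ℝ) - 1) ^ l * ∫ x, x a ^ (2 * l) ∂μ) := by
        rw [← mul_assoc]; exact mul_le_mul_of_nonneg_right hp hA
    _ ≤ 2 ^ l * ((4 ^ l) ^ l * ∫ x, (x ⬝ᵥ x) ^ l ∂μ) := by gcongr
    _ = 2 ^ l * 4 ^ (l * l) * ∫ x, (x ⬝ᵥ x) ^ l ∂μ := by rw [pow_mul]; ring

end CoordinateMoments

end Moments

theorem radial_measure_moment_asymptotics_general (l : ℕ) (ν : Measure ℝ)
    (hmom : Integrable (fun x => x ^ (2 * l)) ν) :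
    (∃ C : ℝ, ∀ p : ℕ, 0 < p →
      ∀ νp : Measure (Fin p → ℝ), IsProbabilityMeasure νp →
      (∀ A : Matrix (Fin p) (Fin p) ℝ, A ∈ Matrix.orthogonalGroup (Fin p) ℝ →
        Measure.map (fun x => A.mulVec x) νp = νp) →
      Measure.map (fun x => Real.sqrt (∑ i, x i ^ 2)) νp = ν →
      ∀ κ : Fin p → ℕ, (∀ i, Even (κ i)) → (∑ i, κ i) = 2 * l →
        |∫ x, ∏ i, x i ^ κ i ∂νp| ≤ C / (p : ℝ) ^ l) ∧
    (∀ p : ℕ, 0 < p →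
      ∀ νp : Measure (Fin p → ℝ), IsProbabilityMeasure νp →
      (∀ A : Matrix (Fin p) (Fin p) ℝ, A ∈ Matrix.orthogonalGroup (Fin p) ℝ →
        Measure.map (fun x => A.mulVec x) νp = νp) →
      Measure.map (fun x => Real.sqrt (∑ i, x i ^ 2)) νp = ν →
      ∀ κ : Fin p → ℕ, Integrable (fun x => ∏ i, x i ^ κ i) νp →
        (∃ i, Odd (κ i)) →
        ∫ x, ∏ i, x i ^ κ i ∂νp = 0) := by
  refine ⟨⟨2 ^ l * 4 ^ (l * l) * ∫ t, t ^ (2 * l) ∂ν, fun p hp νp _ hinv hmap κ hκ hsum => ?_⟩,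
    fun p _ νp _ hinv _ κ _ ⟨i, hi⟩ => integral_prod_pow_eq_zero_of_odd hinv κ hi⟩
  have hR := integrable_dotProduct_self_pow_of_map hmap hmom
  rw [abs_of_nonneg (integral_nonneg fun x => prod_nonneg fun i _ => (hκ i).pow_nonneg _),
    le_div_iff₀ (by positivity), ← integral_dotProduct_self_pow_of_map hmap, mul_comm]
  calc (p : ℝ) ^ l * ∫ x, ∏ i, x i ^ κ i ∂νp ≤ p ^ l * ∫ x, x ⟨0, hp⟩ ^ (2 * l) ∂νp := by
        gcongr ?_ * ?_
        exact integral_prod_pow_le_integral_pow hinv hR hκ hsum _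
    _ ≤ _ := by simpa using card_pow_mul_integral_pow_le hinv hR ⟨0, hp⟩

/-- Moments of the radial probability measure `ν_p` on `ℝ^p` with radial part
`ν ∈ M^1([0,∞))`: if `κ` has all components even with `|κ| = 2l` then
`m_κ(ν_p) = O(p^{-l})` as `p → ∞` (uniformly: `|m_κ(ν_p)| ≤ C / p^l`), and if
some component of `κ` is odd then `m_κ(ν_p) = 0`.  The measure `ν_p` is
characterized as the unique rotation-invariant probability measure on `ℝ^p`
whose pushforward under the Euclidean norm is `ν`. -/
theorem radial_measure_moment_asymptotics (l : ℕ) (ν : Measure ℝ)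
    [IsProbabilityMeasure ν] (hsupp : ν {x | x < 0} = 0)
    (hmom : Integrable (fun x => x ^ (2 * l)) ν) :
    (∃ C : ℝ, ∀ p : ℕ, 0 < p →
      ∀ νp : Measure (Fin p → ℝ), IsProbabilityMeasure νp →
      (∀ A : Matrix (Fin p) (Fin p) ℝ, A ∈ Matrix.orthogonalGroup (Fin p) ℝ →
        Measure.map (fun x => A.mulVec x) νp = νp) →
      Measure.map (fun x => Real.sqrt (∑ i, x i ^ 2)) νp = ν →
      ∀ κ : Fin p → ℕ, (∀ i, Even (κ i)) → (∑ i, κ i) = 2 * l →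
        |∫ x, ∏ i, x i ^ κ i ∂νp| ≤ C / (p : ℝ) ^ l) ∧
    (∀ p : ℕ, 0 < p →
      ∀ νp : Measure (Fin p → ℝ), IsProbabilityMeasure νp →
      (∀ A : Matrix (Fin p) (Fin p) ℝ, A ∈ Matrix.orthogonalGroup (Fin p) ℝ →
        Measure.map (fun x => A.mulVec x) νp = νp) →
      Measure.map (fun x => Real.sqrt (∑ i, x i ^ 2)) νp = ν →
      ∀ κ : Fin p → ℕ, Integrable (fun x => ∏ i, x i ^ κ i) νp →
        (∃ i, Odd (κ i)) →
        ∫ x, ∏ i, x i ^ κ i ∂νp = 0) :=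
  radial_measure_moment_asymptotics_general l ν hmom
end

section
/- Let Z_1 and Z_2 be independent M_{q,q}(ℝ)-valued random variables with all Kronecker moments finite. Then E((Z_1 + Z_2)^{⊗k}) = Σ_{l=0}^{k} Σ_{π ∈ 𝔖((l,k−l))} E(π(Z_1, 𝟙)) ∘ E(π(𝟙, Z_2)), where for π = (π_1,…,π_k) with values in {1,2}, π(A,B) = C_{π_1} ⊗ ⋯ ⊗ C_{π_k} with C_1 = A, C_2 = B, 𝟙 is the all-ones q×q matrix, ⊗ the Kronecker product, and ∘ the Hadamard product. -/
/-!
Choosing one summand in each factor expands `∏ⱼ (Z₁ + Z₂)_{fⱼ gⱼ}` into a sum over the patterns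
`π : Fin k → Fin 2`, and the term of `π` is a function of `Z₁` times a function of `Z₂`, so by
independence its expectation factors. Grouping the patterns by the number `l` of factors taken
from `Z₁` gives the double sum. Every term is integrable by the generalized Hölder inequality:
a product of `k` functions in `Lᵏ` lies in `L¹`.
-/

open Matrix MeasureTheory ProbabilityTheory Finset
open scoped ProbabilityTheory

open scoped ENNReal

theorem Fintype.prod_add_eq_sum_fin_two {ι R : Type*} [Fintype ι] [DecidableEq ι] [CommSemiring R]
    (a b : ι → R) :
    ∏ j, (a j + b j) =
      ∑ π : ι → Fin 2, (∏ j, if π j = 0 then a j else 1) * ∏ j, if π j = 0 then 1 else b j := by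
  calc ∏ j, (a j + b j) = ∏ j, ∑ i : Fin 2, if i = 0 then a j else b j := by simp
    _ = ∑ π : ι → Fin 2, ∏ j, if π j = 0 then a j else b j := Fintype.prod_sum _
    _ = _ := by
      refine Finset.sum_congr rfl fun π _ => ?_
      rw [← Finset.prod_mul_distrib]
      exact Finset.prod_congr rfl fun j _ => by split_ifs <;> simp

theorem MeasureTheory.integrable_finset_prod_of_memLp_card {ι α 𝕜 : Type*} {_ : MeasurableSpace α}
    [NormedCommRing 𝕜] {μ : Measure α} [IsFiniteMeasure μ] {s : Finset ι} {f : ι → α → 𝕜}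
    (hf : ∀ i ∈ s, MemLp (f i) #s μ) :
    Integrable (fun x => ∏ i ∈ s, f i x) μ := by
  have one_le : (1 : ℝ≥0∞) ≤ (∑ _i ∈ s, ((#s : ℕ) : ℝ≥0∞)⁻¹)⁻¹ := by
    rw [sum_const, nsmul_eq_mul, ENNReal.one_le_inv]
    exact ENNReal.mul_inv_le_one _
  exact memLp_one_iff_integrable.mp ((MemLp.prod' hf).mono_exponent one_le)

/-- Stated entrywise at `(f, g)`: the `(f, g)` entry of `π(A, B) = C_{π_1} ⊗ ⋯ ⊗ C_{π_k}` is
`∏ j, C_{π_j} (f j) (g j)`, and the Hadamard product multiplies entries. -/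
theorem kronecker_moment_of_sum_independent_general {q : ℕ} {Ω : Type*} [MeasureSpace Ω]
    (hprob : IsProbabilityMeasure (ℙ : Measure Ω))
    (Z₁ Z₂ : Ω → Matrix (Fin q) (Fin q) ℝ)
    (hindep : IndepFun Z₁ Z₂ ℙ)
    (hmom₁ : ∀ (r : ℕ) (i j : Fin q), MemLp (fun ω => Z₁ ω i j) r ℙ)
    (hmom₂ : ∀ (r : ℕ) (i j : Fin q), MemLp (fun ω => Z₂ ω i j) r ℙ) :
    ∀ (k : ℕ) (f g : Fin k → Fin q),
      ∫ ω, ∏ j, (Z₁ ω + Z₂ ω) (f j) (g j) =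
        ∑ l ∈ Finset.range (k + 1),
          ∑ π ∈ Finset.univ.filter
              (fun π : Fin k → Fin 2 =>
                (Finset.univ.filter fun j => π j = 0).card = l),
            (∫ ω, ∏ j, (if π j = 0 then Z₁ ω (f j) (g j) else 1)) *
              ∫ ω, ∏ j, (if π j = 0 then 1 else Z₂ ω (f j) (g j)) := by
  intro k f g
  set φ : (Fin k → Fin 2) → Matrix (Fin q) (Fin q) ℝ → ℝ :=
    fun π M => ∏ j, if π j = 0 then M (f j) (g j) else 1
  set ψ : (Fin k → Fin 2) → Matrix (Fin q) (Fin q) ℝ → ℝ :=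
    fun π M => ∏ j, if π j = 0 then 1 else M (f j) (g j)
  have hφ : ∀ π, Measurable (φ π) := fun π => Finset.measurable_prod _ fun j _ => by
    by_cases h : π j = 0 <;> simp only [h, if_true, if_false] <;> fun_prop
  have hψ : ∀ π, Measurable (ψ π) := fun π => Finset.measurable_prod _ fun j _ => by
    by_cases h : π j = 0 <;> simp only [h, if_true, if_false] <;> fun_prop
  have hφ_int : ∀ π, Integrable (φ π ∘ Z₁) := fun π =>
    integrable_finset_prod_of_memLp_card fun j _ => by
      by_cases h : π j = 0 <;> simp only [h, if_true, if_false]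
      exacts [hmom₁ _ _ _, memLp_const 1]
  have hψ_int : ∀ π, Integrable (ψ π ∘ Z₂) := fun π =>
    integrable_finset_prod_of_memLp_card fun j _ => by
      by_cases h : π j = 0 <;> simp only [h, if_true, if_false]
      exacts [memLp_const 1, hmom₂ _ _ _]
  have hindep_π : ∀ π, IndepFun (φ π ∘ Z₁) (ψ π ∘ Z₂) ℙ := fun π => hindep.comp (hφ π) (hψ π)
  have hcard : ∀ π ∈ (univ : Finset (Fin k → Fin 2)), #{j | π j = 0} ∈ range (k + 1) :=
    fun π _ => mem_range_succ_iff.mpr ((card_filter_le _ _).trans_eq (card_fin k))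
  calc ∫ ω, ∏ j, (Z₁ ω + Z₂ ω) (f j) (g j)
      = ∫ ω, ∑ π, φ π (Z₁ ω) * ψ π (Z₂ ω) := by
        simp_rw [Matrix.add_apply, Fintype.prod_add_eq_sum_fin_two]; rfl
    _ = ∑ π, ∫ ω, φ π (Z₁ ω) * ψ π (Z₂ ω) :=
        integral_finsetSum _ fun π _ => (hindep_π π).integrable_mul (hφ_int π) (hψ_int π)
    _ = ∑ π, (∫ ω, φ π (Z₁ ω)) * ∫ ω, ψ π (Z₂ ω) := sum_congr rfl fun π _ =>
        (hindep_π π).integral_mul_eq_mul_integral (hφ_int π).1 (hψ_int π).1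
    _ = _ := (sum_fiberwise_of_maps_to hcard _).symm

/-- For independent `M_q(ℝ)`-valued random variables `Z_1, Z_2` with all
moments finite,
`E((Z_1+Z_2)^{⊗k}) = Σ_{l=0}^{k} Σ_{π ∈ 𝔖((l,k-l))} E(π(Z_1,𝟙)) ∘ E(π(𝟙,Z_2))`,
stated entrywise at `(f,g)`: the entry of `π(A,B) = C_{π_1} ⊗ ⋯ ⊗ C_{π_k}`
(with `C_1 = A`, `C_2 = B`, `𝟙` the all-ones matrix) is
`∏ j, C_{π_j} (f j) (g j)`, and the Hadamard product multiplies entries. -/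
theorem kronecker_moment_of_sum_independent {q : ℕ} {Ω : Type*} [MeasureSpace Ω]
    (hprob : IsProbabilityMeasure (ℙ : Measure Ω))
    (Z₁ Z₂ : Ω → Matrix (Fin q) (Fin q) ℝ)
    (hmeas₁ : Measurable Z₁) (hmeas₂ : Measurable Z₂)
    (hindep : IndepFun Z₁ Z₂ ℙ)
    (hmom₁ : ∀ (r : ℕ) (i j : Fin q), MemLp (fun ω => Z₁ ω i j) r ℙ)
    (hmom₂ : ∀ (r : ℕ) (i j : Fin q), MemLp (fun ω => Z₂ ω i j) r ℙ) :
    ∀ (k : ℕ) (f g : Fin k → Fin q),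
      ∫ ω, ∏ j, (Z₁ ω + Z₂ ω) (f j) (g j) =
        ∑ l ∈ Finset.range (k + 1),
          ∑ π ∈ Finset.univ.filter
              (fun π : Fin k → Fin 2 =>
                (Finset.univ.filter fun j => π j = 0).card = l),
            (∫ ω, ∏ j, (if π j = 0 then Z₁ ω (f j) (g j) else 1)) *
              ∫ ω, ∏ j, (if π j = 0 then 1 else Z₂ ω (f j) (g j)) :=
  kronecker_moment_of_sum_independent_general hprob Z₁ Z₂ hindep hmom₁ hmom₂
end
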